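/- Under the stated setting and Invariants 1 and 2, the empirical risk minimizer ĥ on Ŝ satisfies err_D(ĥ) − err_D(h*) ≤ ε/8. -/

import Mathlib

open MeasureTheory

/-- Empirical error of a classifier (labels encoded as `Bool`, standing for `{-1,+1}`)
on a finite labeled dataset: the fraction of examples it misclassifies. -/
noncomputable def empErr {X : Type*} (h : X → Bool) (S : List (X × Bool)) : ℝ :=
  (S.countP (fun p => h p.1 != p.2) : ℝ) / S.length

/-- Empirical disagreement of two classifiers on a finite list of points. -/
noncomputable def empDis {X : Type*} (h h' : X → Bool) (xs : List X) : ℝ :=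
  (xs.countP (fun x => h x != h' x) : ℝ) / xs.length

/-- True error of a classifier under a labeled data distribution `D`. -/
noncomputable def trueErr {X : Type*} [MeasurableSpace X]
    (D : Measure (X × Bool)) (h : X → Bool) : ℝ :=
  (D {p | h p.1 ≠ p.2}).toReal

/-!
Invariant 2 for the pair `(ĥ, h*)` and Invariant 1 with `h' = h*` (whose excess error is `0`)
bound the excess error of `ĥ` by `err(ĥ,Ŝ) - err(h*,Ŝ) + ε/16 + σ + √(σ ρ_S(ĥ,h*))`.
As `ρ_S(ĥ,h*) ≤ err(ĥ,Ŝ) + err(h*,Ŝ)` and `ĥ` minimizes the error on `Ŝ`, AM-GM lets the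
nonpositive term `err(ĥ,Ŝ) - err(h*,Ŝ)` absorb the part of the square root coming from
`err(h*,Ŝ) - err(ĥ,Ŝ)`, leaving `ε/16 + 2 (σ + √(σ err(ĥ,Ŝ))) ≤ ε/16 + ε/256`.
-/

theorem List.countP_le_countP_add_countP {α : Type*} {l : List α} {p q r : α → Bool}
    (h : ∀ a ∈ l, p a → q a ∨ r a) : l.countP p ≤ l.countP q + l.countP r := by
  induction l with
  | nil => simp
  | cons a l ih =>
    have ha := h a List.mem_cons_self
    have hl := ih fun b hb => h b (List.mem_cons_of_mem a hb)
    simp only [List.countP_cons]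
    split_ifs <;> simp_all <;> omega

theorem empErr_nonneg {X : Type*} (h : X → Bool) (S : List (X × Bool)) : 0 ≤ empErr h S := by
  unfold empErr
  positivity

theorem empDis_le_empErr_add_empErr {X : Type*} (h h' : X → Bool) {xs : List X}
    {ys : List Bool} (hlen : ys.length = xs.length) :
    empDis h h' xs ≤ empErr h (xs.zip ys) + empErr h' (xs.zip ys) := by
  have hcount : xs.countP (fun x => h x != h' x) ≤
      (xs.zip ys).countP (fun p => h p.1 != p.2) +
        (xs.zip ys).countP (fun p => h' p.1 != p.2) := by
    conv_lhs => rw [← List.map_fst_zip hlen.ge, List.countP_map]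
    refine List.countP_le_countP_add_countP fun ⟨x, y⟩ _ hne => ?_
    cases hx : h x <;> cases hx' : h' x <;> cases y <;> simp_all
  unfold empDis empErr
  rw [List.length_zip, hlen, min_self, ← add_div]
  gcongr
  exact_mod_cast hcount

theorem Real.sqrt_mul_add_le {σ a b : ℝ} (hσ : 0 ≤ σ) (ha : 0 ≤ a) (hab : a ≤ b) :
    √(σ * (a + b)) ≤ 2 * √(σ * a) + (b - a) + σ / 4 := by
  have hs := Real.sq_sqrt (mul_nonneg hσ ha)
  rw [Real.sqrt_le_left (by positivity)]
  nlinarith [Real.sqrt_nonneg (σ * a), sq_nonneg (b - a - σ / 4)]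

theorem stmt_2_general {X : Type*} [MeasurableSpace X]
    (D : Measure (X × Bool))
    (H : Set (X → Bool))
    (hstar : X → Bool) (hstarH : hstar ∈ H)
    (xs : List X) (ys yhs : List Bool)
    (hlen' : yhs.length = xs.length)
    (hherm : X → Bool) (hhhermH : hherm ∈ H)
    (hhhermopt : ∀ h ∈ H, empErr hherm (xs.zip yhs) ≤ empErr h (xs.zip yhs))
    (ε σ : ℝ) (hε : ε ∈ Set.Ioc (0:ℝ) 1) (hσ : 0 ≤ σ)
    -- Invariant 1 (approximate favorable bias)
    (inv1 : ∀ h ∈ H, ∀ h' ∈ H, trueErr D h' - trueErr D hstar ≤ ε →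
      empErr h (xs.zip ys) - empErr h' (xs.zip ys) ≤
        empErr h (xs.zip yhs) - empErr h' (xs.zip yhs) + ε / 16)
    -- Invariant 2 (concentration)
    (inv2a : ∀ h ∈ H, ∀ h' ∈ H,
      |(empErr h (xs.zip ys) - empErr h' (xs.zip ys)) - (trueErr D h - trueErr D h')|
        ≤ σ + Real.sqrt (σ * empDis h h' xs))
    (inv2b : σ + Real.sqrt (σ * empErr hherm (xs.zip yhs)) ≤ ε / 512) :
    trueErr D hherm - trueErr D hstar ≤ ε / 8 := by
  set A := empErr hherm (xs.zip yhs)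
  set B := empErr hstar (xs.zip yhs)
  have hAB : A ≤ B := hhhermopt hstar hstarH
  have hbias := inv1 hherm hhhermH hstar hstarH (by rw [sub_self]; exact hε.1.le)
  have hconc := (abs_le.mp (inv2a hherm hhhermH hstar hstarH)).1
  have hsqrt : √(σ * empDis hherm hstar xs) ≤ 2 * √(σ * A) + (B - A) + σ / 4 :=
    (Real.sqrt_le_sqrt (mul_le_mul_of_nonneg_left
      (empDis_le_empErr_add_empErr hherm hstar hlen') hσ)).trans
      (Real.sqrt_mul_add_le hσ (empErr_nonneg _ _) hAB)
  linarith [hε.1, Real.sqrt_nonneg (σ * A)]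

/-- Under Invariants 1 and 2, the empirical risk minimizer `hherm` on `Ŝ`
has true excess error at most `ε/8`. -/
theorem stmt_2 {X : Type*} [MeasurableSpace X]
    (D : Measure (X × Bool)) [IsProbabilityMeasure D]
    (H : Set (X → Bool)) (hHmeas : ∀ h ∈ H, Measurable h)
    (hstar : X → Bool) (hstarH : hstar ∈ H)
    (hstaropt : ∀ h ∈ H, trueErr D hstar ≤ trueErr D h)
    (xs : List X) (ys yhs : List Bool)
    (hlen : ys.length = xs.length) (hlen' : yhs.length = xs.length)
    (hherm : X → Bool) (hhhermH : hherm ∈ H)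
    (hhhermopt : ∀ h ∈ H, empErr hherm (xs.zip yhs) ≤ empErr h (xs.zip yhs))
    (ε σ : ℝ) (hε : ε ∈ Set.Ioc (0:ℝ) 1) (hσ : 0 ≤ σ)
    -- Invariant 1 (approximate favorable bias)
    (inv1 : ∀ h ∈ H, ∀ h' ∈ H, trueErr D h' - trueErr D hstar ≤ ε →
      empErr h (xs.zip ys) - empErr h' (xs.zip ys) ≤
        empErr h (xs.zip yhs) - empErr h' (xs.zip yhs) + ε / 16)
    -- Invariant 2 (concentration)
    (inv2a : ∀ h ∈ H, ∀ h' ∈ H,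
      |(empErr h (xs.zip ys) - empErr h' (xs.zip ys)) - (trueErr D h - trueErr D h')|
        ≤ σ + Real.sqrt (σ * empDis h h' xs))
    (inv2b : σ + Real.sqrt (σ * empErr hherm (xs.zip yhs)) ≤ ε / 512) :
    trueErr D hherm - trueErr D hstar ≤ ε / 8 :=
  stmt_2_general D H hstar hstarH xs ys yhs hlen' hherm hhhermH hhhermopt ε σ hε hσ inv1 inv2a inv2b
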